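/- Let x₁, x₂, x₃, x₄ be the roots of a monic quartic p(x) = x⁴ + a x³ + b x² + c x + d with d ≠ 0, labeled continuously as functions of the coefficients over a connected parameter region Ω, and suppose that throughout Ω we have |x₂| ≥ |x₁| > |x₃| ≥ |x₄| (a persistent spectral gap between the two largest-modulus roots and the two smallest). If the coefficients a, b, c, d are holomorphic functions on Ω ⊆ ℂⁿ, then the product x₁ x₂ of the two largest-modulus roots is a single-valued holomorphic function on Ω. -/

import Mathlib

/-!
The six pairwise products `xᵢxⱼ` of the roots of a quartic are the roots of a sextic whose
coefficients are polynomials in those of the quartic, hence holomorphic. The gap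
`|x₂| ≥ |x₁| > |x₃| ≥ |x₄|` makes `x₁x₂` strictly larger in modulus than the other five products,
so it is a simple root of that sextic. Writing the sextic at the fixed value `y₀ = x₁x₂(w₀)` as
`(x₁x₂(w) - y₀) · q(w)`, with `q` the (continuous, nonvanishing at `w₀`) product of the other
five factors, exhibits `x₁x₂ - y₀` as a holomorphic function vanishing at `w₀` divided by a
continuous nonvanishing one, which is differentiable at `w₀`.
-/

open Asymptotics Filter Topology

section Calculus

variable {𝕜 E F : Type*} [NontriviallyNormedField 𝕜] [NormedAddCommGroup E] [NormedSpace 𝕜 E]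
  [NormedAddCommGroup F] [NormedSpace 𝕜 F]

theorem HasFDerivAt.smul_continuousAt_of_eq_zero {f : E → 𝕜} {r : E → F} {f' : E →L[𝕜] 𝕜}
    {x : E} (hf : HasFDerivAt f f' x) (hfx : f x = 0) (hr : ContinuousAt r x) :
    HasFDerivAt (fun y => f y • r y) (f'.smulRight (r x)) x := by
  have hremainder : (fun y => (f y - f x - f' (y - x)) • r y) =o[𝓝 x] fun y => y - x :=
    ((hf.isLittleO.norm_right.smul_isBigO (hr.isBigO_one ℝ)).congr_right
      fun _ => mul_one _).of_norm_right
  have hlinear : (fun y => f' (y - x) • (r y - r x)) =o[𝓝 x] fun y => y - x := by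
    have hr' : (fun y => r y - r x) =o[𝓝 x] fun _ => (1 : ℝ) :=
      (isLittleO_one_iff ℝ).mpr (tendsto_sub_nhds_zero_iff.mpr hr)
    exact (((f'.isBigO_comp _ _).norm_right.smul_isLittleO hr').congr_right
      fun _ => mul_one _).of_norm_right
  refine .of_isLittleO ((hremainder.add hlinear).congr_left fun y => ?_)
  simp only [hfx, zero_smul, sub_zero, ContinuousLinearMap.smulRight_apply, sub_smul, smul_sub]
  abel

theorem HasFDerivAt.of_sub_mul_eventuallyEq {g q φ : E → 𝕜} {φ' : E →L[𝕜] 𝕜} {x : E}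
    (hφ : HasFDerivAt φ φ' x) (hq : ContinuousAt q x) (hqx : q x ≠ 0)
    (heq : ∀ᶠ y in 𝓝 x, (g y - g x) * q y = φ y) :
    HasFDerivAt g (φ'.smulRight (q x)⁻¹) x := by
  have hφx : φ x = 0 := by simpa using heq.self_of_nhds.symm
  have hg : (fun y => g x + φ y • (q y)⁻¹) =ᶠ[𝓝 x] g := by
    filter_upwards [heq, hq.eventually_ne hqx] with y hy hqy
    rw [smul_eq_mul, ← hy, mul_inv_cancel_right₀ hqy, add_sub_cancel]
  exact ((hφ.smul_continuousAt_of_eq_zero hφx (hq.inv₀ hqx)).const_add (g x))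
    |>.congr_of_eventuallyEq hg.symm

end Calculus

section Algebra

variable {K : Type*} [Field K] [CharZero K]

theorem quartic_vieta {A B C D x₁ x₂ x₃ x₄ : K}
    (h : ∀ x : K, x ^ 4 + A * x ^ 3 + B * x ^ 2 + C * x + D =
      (x - x₁) * (x - x₂) * (x - x₃) * (x - x₄)) :
    A = -(x₁ + x₂ + x₃ + x₄) ∧
      B = x₁ * x₂ + x₁ * x₃ + x₁ * x₄ + x₂ * x₃ + x₂ * x₄ + x₃ * x₄ ∧
      C = -(x₁ * x₂ * x₃ + x₁ * x₂ * x₄ + x₁ * x₃ * x₄ + x₂ * x₃ * x₄) ∧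
      D = x₁ * x₂ * x₃ * x₄ := by
  -- Compare both sides at `x = 0, ±1, ±2` and invert the resulting Vandermonde system.
  have h0 := h 0
  have h1 := h 1
  have hm1 := h (-1)
  have h2 := h 2
  have hm2 := h (-2)
  refine ⟨?_, ?_, ?_, ?_⟩
  · linear_combination (-1/6 : K) * h1 + (1/6 : K) * hm1 + (1/12 : K) * h2 + (-1/12 : K) * hm2
  · linear_combination (-5/4 : K) * h0 + (2/3 : K) * h1 + (2/3 : K) * hm1
      + (-1/24 : K) * h2 + (-1/24 : K) * hm2
  · linear_combination (2/3 : K) * h1 + (-2/3 : K) * hm1 + (-1/12 : K) * h2 + (1/12 : K) * hm2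
  · linear_combination h0

def pairProductSextic {R : Type*} [CommRing R] (A B C D y : R) : R :=
  (y ^ 2 + D) ^ 3 - B * y * (y ^ 2 + D) ^ 2 + (A * C - 4 * D) * y ^ 2 * (y ^ 2 + D)
    - (A ^ 2 * D + C ^ 2 - 4 * B * D) * y ^ 3

theorem pairProductSextic_eq_prod {A B C D x₁ x₂ x₃ x₄ : K}
    (h : ∀ x : K, x ^ 4 + A * x ^ 3 + B * x ^ 2 + C * x + D =
      (x - x₁) * (x - x₂) * (x - x₃) * (x - x₄)) (y : K) :
    pairProductSextic A B C D y = (y - x₁ * x₂) * (y - x₁ * x₃) * (y - x₁ * x₄) *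
      (y - x₂ * x₃) * (y - x₂ * x₄) * (y - x₃ * x₄) := by
  obtain ⟨rfl, rfl, rfl, rfl⟩ := quartic_vieta h
  unfold pairProductSextic
  ring

end Algebra

theorem pairProducts_sub_ne_zero_of_norm_gap {𝕜 : Type*} [NormedField 𝕜] {x₁ x₂ x₃ x₄ : 𝕜}
    (h₂₁ : ‖x₁‖ ≤ ‖x₂‖) (h₁₃ : ‖x₃‖ < ‖x₁‖) (h₃₄ : ‖x₄‖ ≤ ‖x₃‖) :
    (x₁ * x₂ - x₁ * x₃) * (x₁ * x₂ - x₁ * x₄) * (x₁ * x₂ - x₂ * x₃) *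
      (x₁ * x₂ - x₂ * x₄) * (x₁ * x₂ - x₃ * x₄) ≠ 0 := by
  have hne {u : 𝕜} (hu : ‖u‖ < ‖x₁‖ * ‖x₂‖) : x₁ * x₂ - u ≠ 0 :=
    sub_ne_zero.mpr fun h => (h ▸ norm_mul x₁ x₂ ▸ hu).false
  have h₄₁ := h₃₄.trans_lt h₁₃
  have h₁ : 0 < ‖x₁‖ := (norm_nonneg _).trans_lt h₁₃
  have h₂ : 0 < ‖x₂‖ := h₁.trans_le h₂₁
  have h₃ : 0 ≤ ‖x₃‖ := norm_nonneg _
  refine mul_ne_zero (mul_ne_zero (mul_ne_zero (mul_ne_zero ?_ ?_) ?_) ?_) ?_ <;>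
    apply hne <;> rw [norm_mul] <;> nlinarith

theorem product_of_large_roots_holomorphic_general (n : ℕ) (Ω : Set (Fin n → ℂ))
    (hΩo : IsOpen Ω)
    (a b c d x₁ x₂ x₃ x₄ : (Fin n → ℂ) → ℂ)
    (ha : DifferentiableOn ℂ a Ω) (hb : DifferentiableOn ℂ b Ω)
    (hc : DifferentiableOn ℂ c Ω) (hd : DifferentiableOn ℂ d Ω)
    (hx₁ : ContinuousOn x₁ Ω) (hx₂ : ContinuousOn x₂ Ω)
    (hx₃ : ContinuousOn x₃ Ω) (hx₄ : ContinuousOn x₄ Ω)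
    (hroots : ∀ w ∈ Ω, ∀ x : ℂ,
      x ^ 4 + a w * x ^ 3 + b w * x ^ 2 + c w * x + d w =
        (x - x₁ w) * (x - x₂ w) * (x - x₃ w) * (x - x₄ w))
    (hgap : ∀ w ∈ Ω, ‖x₂ w‖ ≥ ‖x₁ w‖ ∧ ‖x₁ w‖ > ‖x₃ w‖ ∧ ‖x₃ w‖ ≥ ‖x₄ w‖) :
    DifferentiableOn ℂ (fun w => x₁ w * x₂ w) Ω := by
  intro w₀ hw₀
  have hΩ : Ω ∈ 𝓝 w₀ := hΩo.mem_nhds hw₀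
  set y₀ := x₁ w₀ * x₂ w₀
  set q := fun w => (y₀ - x₁ w * x₃ w) * (y₀ - x₁ w * x₄ w) * (y₀ - x₂ w * x₃ w) *
    (y₀ - x₂ w * x₄ w) * (y₀ - x₃ w * x₄ w)
  have hq : ContinuousAt q w₀ := by
    have := hx₁.continuousAt hΩ; have := hx₂.continuousAt hΩ
    have := hx₃.continuousAt hΩ; have := hx₄.continuousAt hΩ
    fun_prop
  have hqw₀ : q w₀ ≠ 0 :=
    let ⟨h₂₁, h₁₃, h₃₄⟩ := hgap w₀ hw₀
    pairProducts_sub_ne_zero_of_norm_gap h₂₁ h₁₃ h₃₄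
  have hφ : DifferentiableAt ℂ (fun w => -pairProductSextic (a w) (b w) (c w) (d w) y₀) w₀ := by
    have := ha.differentiableAt hΩ; have := hb.differentiableAt hΩ
    have := hc.differentiableAt hΩ; have := hd.differentiableAt hΩ
    unfold pairProductSextic
    fun_prop
  have heq : ∀ᶠ w in 𝓝 w₀, (x₁ w * x₂ w - y₀) * q w =
      -pairProductSextic (a w) (b w) (c w) (d w) y₀ := by
    filter_upwards [hΩ] with w hw
    rw [pairProductSextic_eq_prod (hroots w hw)]
    ring
  exact (hφ.hasFDerivAt.of_sub_mul_eventuallyEq hq hqw₀ heq).differentiableAt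
    |>.differentiableWithinAt

/-- If the coefficients of a monic quartic (with nonvanishing constant term) are holomorphic
on a connected open region `Ω ⊆ ℂⁿ`, the roots are labeled continuously as `x₁, …, x₄`, and
a persistent spectral gap `|x₂| ≥ |x₁| > |x₃| ≥ |x₄|` holds throughout `Ω`, then the product
`x₁ x₂` of the two largest-modulus roots is a single-valued holomorphic function on `Ω`. -/
theorem product_of_large_roots_holomorphic (n : ℕ) (Ω : Set (Fin n → ℂ))
    (hΩo : IsOpen Ω) (hΩc : IsConnected Ω)
    (a b c d x₁ x₂ x₃ x₄ : (Fin n → ℂ) → ℂ)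
    (ha : DifferentiableOn ℂ a Ω) (hb : DifferentiableOn ℂ b Ω)
    (hc : DifferentiableOn ℂ c Ω) (hd : DifferentiableOn ℂ d Ω)
    (hd0 : ∀ w ∈ Ω, d w ≠ 0)
    (hx₁ : ContinuousOn x₁ Ω) (hx₂ : ContinuousOn x₂ Ω)
    (hx₃ : ContinuousOn x₃ Ω) (hx₄ : ContinuousOn x₄ Ω)
    (hroots : ∀ w ∈ Ω, ∀ x : ℂ,
      x ^ 4 + a w * x ^ 3 + b w * x ^ 2 + c w * x + d w =
        (x - x₁ w) * (x - x₂ w) * (x - x₃ w) * (x - x₄ w))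
    (hgap : ∀ w ∈ Ω, ‖x₂ w‖ ≥ ‖x₁ w‖ ∧ ‖x₁ w‖ > ‖x₃ w‖ ∧ ‖x₃ w‖ ≥ ‖x₄ w‖) :
    DifferentiableOn ℂ (fun w => x₁ w * x₂ w) Ω :=
  product_of_large_roots_holomorphic_general n Ω hΩo a b c d x₁ x₂ x₃ x₄ ha hb hc hd hx₁ hx₂ hx₃ hx₄
    hroots hgap
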